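/- Let N > 100 and let (x_1, …, x_N) be the unique strictly decreasing zero-mean solution of the MIW recursion. Then for every n with 1 ≤ n ≤ m − 1, x_n ≤ √(2(1 + log(m/n))). -/

import Mathlib

noncomputable section

/-- Partial sums `S_n = x_1 + ⋯ + x_n`. -/
def Ssum (x : ℕ → ℝ) (n : ℕ) : ℝ := ∑ i ∈ Finset.Icc 1 n, x i

/-- `x` is a solution of the MIW recursion
`x_{n+1} = x_n - 1/(x_1 + ⋯ + x_n)` for `1 ≤ n ≤ N - 1`. -/
def IsMIW (N : ℕ) (x : ℕ → ℝ) : Prop :=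
  ∀ n, 1 ≤ n → n ≤ N - 1 → Ssum x n ≠ 0 ∧ x (n + 1) = x n - 1 / Ssum x n

/-- `m = (N+1)/2` if `N` is odd and `m = N/2` if `N` is even; in natural number
division both equal `(N+1)/2`. -/
def mIdx (N : ℕ) : ℕ := (N + 1) / 2

/-! Suppose `x_n > √(2(1 + log(m/n)))`. Since `S_k ≥ k x_k`, the recursion gives
`x_{k+1} ≥ x_k - 1/(k x_k)`, and squaring propagates `x_k² ≥ x_n² - 2 ∑_{j=n}^{k-1} 1/j`
for `n ≤ k ≤ m`, as long as the right side stays above `2/k`; the bound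
`∑_{j=n}^{k-1} 1/j ≤ 1/n - 1/k + log(k/n)` guarantees this. Summing the lower bounds
(with `x_k ≥ x_n` for `k < n`) gives `∑_{k ≤ m} x_k² > 2m ≥ N`. But the recursion conserves
`∑_{k ≤ K} x_k² = S_K x_K + K - 1`, so the zero mean forces `∑_{k ≤ N} x_k² = N - 1`. -/

open Finset Real

lemma sum_Ico_inv_le {n k : ℕ} (hn : 1 ≤ n) (hk : n ≤ k) :
    ∑ j ∈ Ico n k, (j : ℝ)⁻¹ ≤ (n : ℝ)⁻¹ - (k : ℝ)⁻¹ + (log k - log n) := by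
  induction k, hk using Nat.le_induction with
  | base => simp
  | succ k hk ih =>
    have hk0 : (0 : ℝ) < k := by exact_mod_cast hn.trans hk
    have hlog : ((k : ℝ) + 1)⁻¹ ≤ log ((k + 1) / k) := by
      have := one_sub_inv_le_log_of_pos (x := ((k : ℝ) + 1) / k) (by positivity)
      rw [inv_div] at this
      convert this using 1
      field_simp
      ring
    rw [log_div (by positivity) hk0.ne'] at hlog
    rw [sum_Ico_succ_top hk]
    push_cast
    linarith

def harmonicDecay (a : ℝ) (n k : ℕ) : ℝ := a - 2 * ∑ j ∈ Ico n k, (j : ℝ)⁻¹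

lemma harmonicDecay_of_le (a : ℝ) {n k : ℕ} (hk : k ≤ n) : harmonicDecay a n k = a := by
  simp [harmonicDecay, Ico_eq_empty_of_le hk]

lemma harmonicDecay_succ (a : ℝ) {n k : ℕ} (hk : n ≤ k) :
    harmonicDecay a n (k + 1) = harmonicDecay a n k - 2 / k := by
  rw [harmonicDecay, harmonicDecay, sum_Ico_succ_top hk]
  ring

lemma sum_Icc_harmonicDecay (a : ℝ) {n M : ℕ} (hn : 1 ≤ n) (hM : n ≤ M) :
    ∑ k ∈ Icc 1 M, harmonicDecay a n k = M * harmonicDecay a n M + 2 * (M - n) := by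
  induction M, hM using Nat.le_induction with
  | base =>
    rw [sum_congr rfl fun k hk => harmonicDecay_of_le a (mem_Icc.1 hk).2,
      harmonicDecay_of_le a le_rfl]
    simp
  | succ M hM ih =>
    have hM0 : (M : ℝ) ≠ 0 := by exact_mod_cast (show 0 < M by omega).ne'
    rw [sum_Icc_succ_top (by omega), ih, harmonicDecay_succ a hM]
    push_cast
    field_simp
    ring

lemma lt_harmonicDecay {a : ℝ} {n k m : ℕ} (hn : 1 ≤ n) (hk : n ≤ k) (hkm : k ≤ m)
    (ha : 2 * (1 + log (m / n)) < a) :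
    2 - 2 * (n : ℝ)⁻¹ + 2 * (k : ℝ)⁻¹ + 2 * log (m / k) < harmonicDecay a n k := by
  have hn0 : (n : ℝ) ≠ 0 := by exact_mod_cast (show 0 < n by omega).ne'
  have hk0 : (k : ℝ) ≠ 0 := by exact_mod_cast (show 0 < k by omega).ne'
  have hm0 : (m : ℝ) ≠ 0 := by exact_mod_cast (show 0 < m by omega).ne'
  rw [log_div hm0 hn0] at ha
  rw [log_div hm0 hk0, harmonicDecay]
  linarith [sum_Ico_inv_le hn hk]

lemma AntitoneOn.natCast_mul_le_Ssum {N k : ℕ} {x : ℕ → ℝ} (hx : AntitoneOn x (Set.Icc 1 N))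
    (hk : k ≤ N) : k * x k ≤ Ssum x k := by
  calc (k : ℝ) * x k = ∑ _i ∈ Icc 1 k, x k := by simp
    _ ≤ Ssum x k := sum_le_sum fun i hi => by
      simp only [mem_Icc] at hi
      exact hx ⟨hi.1, by omega⟩ ⟨by omega, hk⟩ hi.2

lemma IsMIW.sum_sq_Icc {N K : ℕ} {x : ℕ → ℝ} (hx : IsMIW N x) (hK : 1 ≤ K)
    (hKN : K ≤ N) :
    ∑ i ∈ Icc 1 K, x i ^ 2 = Ssum x K * x K + (K - 1) := by
  induction K, hK using Nat.le_induction with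
  | base => simp [Ssum, sq]
  | succ k hk ih =>
    obtain ⟨hS, hrec⟩ := hx k hk (by omega)
    have hSsucc : Ssum x (k + 1) = Ssum x k + x (k + 1) := sum_Icc_succ_top (by omega) _
    rw [sum_Icc_succ_top (by omega), ih (by omega), hSsucc, hrec]
    push_cast
    field_simp
    ring

lemma IsMIW.sum_sq_eq {N : ℕ} {x : ℕ → ℝ} (hx : IsMIW N x) (hN : 1 ≤ N)
    (hmean : ∑ i ∈ Icc 1 N, x i = 0) : ∑ i ∈ Icc 1 N, x i ^ 2 = N - 1 := by
  rw [hx.sum_sq_Icc hN le_rfl, Ssum, hmean, zero_mul, zero_add]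

lemma sub_one_div_pos_and_sq_le {a s k : ℝ} (hk : 0 < k) (ha : 0 < a) (hs : k * a ≤ s)
    (hka : 2 ≤ k * a ^ 2) : 0 < a - 1 / s ∧ a ^ 2 - 2 / k ≤ (a - 1 / s) ^ 2 := by
  have hka0 : 0 < k * a := mul_pos hk ha
  have hs_le : 1 / s ≤ 1 / (k * a) := one_div_le_one_div_of_le hka0 hs
  have hpos : 0 < a - 1 / (k * a) := by
    rw [sub_pos, div_lt_iff₀ hka0]
    nlinarith
  have hexpand : (a - 1 / (k * a)) ^ 2 = a ^ 2 - 2 / k + (1 / (k * a)) ^ 2 := by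
    field_simp
    ring
  refine ⟨hpos.trans_le (by linarith), ?_⟩
  have hsq : (a - 1 / (k * a)) ^ 2 ≤ (a - 1 / s) ^ 2 :=
    pow_le_pow_left₀ hpos.le (by linarith) 2
  nlinarith [sq_nonneg (1 / (k * a))]

lemma IsMIW.harmonicDecay_le_sq {N n m : ℕ} {x : ℕ → ℝ} (hx : IsMIW N x)
    (hanti : AntitoneOn x (Set.Icc 1 N)) (hn : 1 ≤ n) (hmN : m < N) (hxn : 0 < x n)
    (hA : ∀ k, n ≤ k → k < m → 2 / k ≤ harmonicDecay (x n ^ 2) n k) :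
    ∀ k, n ≤ k → k ≤ m → 0 < x k ∧ harmonicDecay (x n ^ 2) n k ≤ x k ^ 2 := by
  intro k hk
  induction k, hk using Nat.le_induction with
  | base => exact fun _ => ⟨hxn, (harmonicDecay_of_le _ le_rfl).le⟩
  | succ k hk ih =>
    intro hkm
    obtain ⟨hxk, hAk⟩ := ih (by omega)
    have hk0 : (0 : ℝ) < k := by exact_mod_cast (show 0 < k by omega)
    have h2 : 2 ≤ k * x k ^ 2 := by
      have := hA k hk (by omega)
      rw [div_le_iff₀' hk0] at this
      nlinarith
    obtain ⟨hpos, hsq⟩ := sub_one_div_pos_and_sq_le hk0 hxk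
      (hanti.natCast_mul_le_Ssum (by omega)) h2
    rw [← (hx k (by omega) (by omega)).2] at hpos hsq
    rw [harmonicDecay_succ _ hk]
    exact ⟨hpos, by linarith⟩

lemma IsMIW.lt_sum_sq {N n m : ℕ} {x : ℕ → ℝ} (hx : IsMIW N x)
    (hanti : AntitoneOn x (Set.Icc 1 N)) (hn : 1 ≤ n) (hnm : n ≤ m) (hmN : m < N)
    (hxn : 0 < x n) (hxn2 : 2 * (1 + log (m / n)) < x n ^ 2) :
    2 * (m : ℝ) < ∑ i ∈ Icc 1 m, x i ^ 2 := by
  have hn0 : (0 : ℝ) < n := by exact_mod_cast (show 0 < n by omega)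
  have hnm' : (n : ℝ) ≤ m := by exact_mod_cast hnm
  have hm0 : (0 : ℝ) < m := hn0.trans_le hnm'
  have hinv : (n : ℝ)⁻¹ ≤ 1 := inv_le_one_of_one_le₀ (by exact_mod_cast hn)
  have hA : ∀ k, n ≤ k → k < m → 2 / k ≤ harmonicDecay (x n ^ 2) n k := by
    intro k hk hkm
    have hlog : 0 ≤ log (m / k) :=
      log_nonneg ((one_le_div (by exact_mod_cast (show 0 < k by omega))).2
        (by exact_mod_cast hkm.le))
    have := lt_harmonicDecay hn hk hkm.le hxn2
    rw [div_eq_mul_inv]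
    linarith
  have hle : ∀ k ∈ Icc 1 m, harmonicDecay (x n ^ 2) n k ≤ x k ^ 2 := by
    intro k hk
    rw [mem_Icc] at hk
    rcases le_total k n with hkn | hnk
    · rw [harmonicDecay_of_le _ hkn]
      have : x n ≤ x k := hanti ⟨hk.1, by omega⟩ ⟨hn, by omega⟩ hkn
      nlinarith
    · exact (hx.harmonicDecay_le_sq hanti hn hmN hxn hA k hnk hk.2).2
  have hAm := lt_harmonicDecay hn hnm le_rfl hxn2
  rw [div_self hm0.ne', log_one, mul_zero, add_zero] at hAm
  calc 2 * (m : ℝ) ≤ m * (2 - 2 * (n : ℝ)⁻¹ + 2 * (m : ℝ)⁻¹) + 2 * (m - n) := by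
        have hmm : (m : ℝ) * (m : ℝ)⁻¹ = 1 := mul_inv_cancel₀ hm0.ne'
        have hnn : (n : ℝ) * (n : ℝ)⁻¹ = 1 := mul_inv_cancel₀ hn0.ne'
        nlinarith [mul_nonneg (sub_nonneg.2 hnm') (sub_nonneg.2 hinv)]
    _ < m * harmonicDecay (x n ^ 2) n m + 2 * (m - n) := by gcongr
    _ = ∑ k ∈ Icc 1 m, harmonicDecay (x n ^ 2) n k := (sum_Icc_harmonicDecay _ hn hnm).symm
    _ ≤ ∑ i ∈ Icc 1 m, x i ^ 2 := sum_le_sum hle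

theorem xn_upper_bound (N : ℕ) (x : ℕ → ℝ)
    (hMIW : IsMIW N x) (hdec : ∀ n, 1 ≤ n → n < N → x (n + 1) < x n)
    (hmean : ∑ i ∈ Finset.Icc 1 N, x i = 0) :
    ∀ n, 1 ≤ n → n ≤ mIdx N - 1 →
      x n ≤ Real.sqrt (2 * (1 + Real.log ((mIdx N : ℝ) / (n : ℝ)))) := by
  intro n hn hnm
  have hm : 2 * mIdx N ≤ N + 1 ∧ N ≤ 2 * mIdx N := by unfold mIdx; omega
  have hanti : AntitoneOn x (Set.Icc 1 N) :=
    antitoneOn_of_add_one_le Set.ordConnected_Icc fun k _ hk hk1 =>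
      (hdec k hk.1 (by simp only [Set.mem_Icc] at hk1; omega)).le
  by_contra! hlt
  have hxn : 0 < x n := (sqrt_nonneg _).trans_lt hlt
  have hlower := hMIW.lt_sum_sq hanti hn (by omega) (by omega) hxn ((sqrt_lt' hxn).1 hlt)
  have hupper : ∑ i ∈ Icc 1 (mIdx N), x i ^ 2 ≤ N - 1 := by
    rw [← hMIW.sum_sq_eq (by omega) hmean]
    exact sum_le_sum_of_subset_of_nonneg (Icc_subset_Icc le_rfl (by omega))
      fun i _ _ => sq_nonneg (x i)
  have hN : (N : ℝ) ≤ 2 * mIdx N := by exact_mod_cast hm.2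
  linarith
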